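/- arXiv:cs/0409029 — 4 statements merged into one kernel-verified Lean document; each statement's English description precedes it below -/
import Mathlib

section
/- Let Q ≥ 2 be an integer and B ≥ 2 a real number such that every prime factor q of Q satisfies q ≥ B. Then φ(Q)/(Q - 1) ≥ (1 + 1/(Q - 1)) · (1 - 1/B)^{log_B Q}, where log_B Q = (ln Q)/(ln B) and the power is the real power function. -/
/-!
If every prime factor of `n` is at least `B`, then `B ^ ω(n) ≤ ∏_{p ∣ n} p ≤ n`, so `n` has at most
`log_B n` distinct prime factors. Each of them contributes a factor `1 - 1/p ≥ 1 - 1/B` to the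
product formula `φ(n) = n ∏_{p ∣ n} (1 - 1/p)`, and since `1 - 1/B < 1`, raising it to the larger
exponent `log_B n` only decreases it.
-/

namespace Nat

variable {n : ℕ} {B : ℝ}

theorem pow_card_primeFactors_le (hn : n ≠ 0) (hB : 0 ≤ B)
    (hfac : ∀ p ∈ n.primeFactors, B ≤ p) : B ^ n.primeFactors.card ≤ n :=
  calc B ^ n.primeFactors.card = ∏ _p ∈ n.primeFactors, B := (Finset.prod_const B).symm
    _ ≤ ∏ p ∈ n.primeFactors, (p : ℝ) := Finset.prod_le_prod (fun _ _ => hB) hfac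
    _ ≤ n := by
      rw [← Nat.cast_prod]
      exact_mod_cast Nat.le_of_dvd (Nat.pos_of_ne_zero hn) n.prod_primeFactors_dvd

theorem card_primeFactors_le_logb (hn : n ≠ 0) (hB : 1 < B)
    (hfac : ∀ p ∈ n.primeFactors, B ≤ p) : (n.primeFactors.card : ℝ) ≤ Real.logb B n := by
  rw [Real.le_logb_iff_rpow_le hB (by positivity), Real.rpow_natCast]
  exact pow_card_primeFactors_le hn (by linarith) hfac

theorem one_sub_inv_pow_card_primeFactors_mul_le_totient (hB : 1 ≤ B)
    (hfac : ∀ p ∈ n.primeFactors, B ≤ p) : (1 - B⁻¹) ^ n.primeFactors.card * n ≤ φ n := by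
  have htotient : (φ n : ℝ) = (∏ p ∈ n.primeFactors, (1 - (p : ℝ)⁻¹)) * n := by
    have h := congrArg ((↑) : ℚ → ℝ) (totient_eq_mul_prod_factors n)
    push_cast at h
    rw [h, mul_comm]
  rw [htotient, ← Finset.prod_const]
  have : 0 ≤ 1 - B⁻¹ := sub_nonneg.mpr (inv_le_one_of_one_le₀ hB)
  gcongr with p hp
  exact hfac p hp

theorem one_sub_inv_rpow_logb_mul_le_totient (hn : n ≠ 0) (hB : 1 < B)
    (hfac : ∀ p ∈ n.primeFactors, B ≤ p) : (1 - B⁻¹) ^ Real.logb B n * n ≤ φ n :=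
  calc (1 - B⁻¹) ^ Real.logb B n * n ≤ (1 - B⁻¹) ^ n.primeFactors.card * n := by
        rw [← Real.rpow_natCast]
        refine mul_le_mul_of_nonneg_right ?_ n.cast_nonneg
        exact Real.rpow_le_rpow_of_exponent_ge (sub_pos.mpr (inv_lt_one_of_one_lt₀ hB))
          (sub_le_self _ (inv_nonneg.mpr (by linarith))) (card_primeFactors_le_logb hn hB hfac)
    _ ≤ φ n := one_sub_inv_pow_card_primeFactors_mul_le_totient hB.le hfac

end Nat

/-- Let `Q ≥ 2` be an integer and `B ≥ 2` a real number such that every prime factor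
`q` of `Q` satisfies `q ≥ B`. Then `φ(Q)/(Q - 1) ≥ (1 + 1/(Q - 1)) · (1 - 1/B)^{log_B Q}`,
where `log_B Q = (ln Q)/(ln B)` and the power is the real power function. -/
theorem totient_ratio_ge
    (Q : ℕ) (hQ : 2 ≤ Q) (B : ℝ) (hB : 2 ≤ B)
    (hfac : ∀ q : ℕ, q.Prime → q ∣ Q → B ≤ (q : ℝ)) :
    (1 + 1 / ((Q : ℝ) - 1)) * (1 - 1 / B) ^ (Real.log Q / Real.log B) ≤
      (Nat.totient Q : ℝ) / ((Q : ℝ) - 1) := by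
  have hQ1 : (1 : ℝ) < Q := by exact_mod_cast hQ
  have hbound := Nat.one_sub_inv_rpow_logb_mul_le_totient (by omega) (by linarith : 1 < B)
    fun p hp => hfac p (Nat.prime_of_mem_primeFactors hp) (Nat.dvd_of_mem_primeFactors hp)
  have hQ_div : 1 + 1 / ((Q : ℝ) - 1) = Q / (Q - 1) := by
    field_simp [(sub_pos.mpr hQ1).ne']
    ring
  rw [hQ_div, div_mul_eq_mul_div, mul_comm, one_div]
  exact div_le_div_of_nonneg_right hbound (by linarith)
end

section
/- Let ε and h be real numbers with 0 < ε < 1 and h > 1, and set B = ln(h)/ε. If B ≥ 4, then (1 - 1/B)^{log_B h} > 1 - ε, where log_B h = (ln h)/(ln B) and the power is the real power function. -/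
/-!
Write `x = 1 - 1/B` and `p = log_B h = ε B / ln B`. Then `x ^ p = exp (p ln x) > 1 + p ln x`, and
`ln x ≥ -1/(B - 1)` gives `p ln x ≥ -ε · B / ((B - 1) ln B) ≥ -ε`, the last step because
`(B - 1) ln B ≥ B` once `B ≥ 4`.
-/

namespace Real

lemma one_add_mul_log_lt_rpow {x p : ℝ} (hx : 0 < x) (hx1 : x ≠ 1) (hp : p ≠ 0) :
    1 + p * log x < x ^ p := by
  have hpx : p * log x ≠ 0 := mul_ne_zero hp (log_ne_zero_of_pos_of_ne_one hx hx1)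
  rw [rpow_def_of_pos hx, mul_comm (log x)]
  linarith [add_one_lt_exp hpx]

lemma neg_inv_sub_one_le_log_one_sub_inv {B : ℝ} (hB : 1 < B) :
    -(B - 1)⁻¹ ≤ log (1 - B⁻¹) := by
  have hx : 0 < 1 - B⁻¹ := sub_pos.mpr (inv_lt_one_of_one_lt₀ hB)
  have hB1 : B - 1 ≠ 0 := by linarith
  calc -(B - 1)⁻¹ = 1 - (1 - B⁻¹)⁻¹ := by field_simp; ring
    _ ≤ log (1 - B⁻¹) := one_sub_inv_le_log_of_pos hx

-- `ln 4 > 4/3`, and `(B - 1) · 4/3 ≥ B` exactly when `B ≥ 4`.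
lemma le_sub_one_mul_log {B : ℝ} (hB : 4 ≤ B) : B ≤ (B - 1) * log B := by
  have hlog4 : 4 / 3 < log 4 := by
    rw [show (4 : ℝ) = 2 ^ 2 by norm_num, log_pow]
    linarith [log_two_gt_d9]
  have hlogB : log 4 ≤ log B := log_le_log (by norm_num) hB
  nlinarith

lemma one_sub_lt_one_sub_inv_rpow {ε B : ℝ} (hε : 0 < ε) (hB : 4 ≤ B) :
    1 - ε < (1 - B⁻¹) ^ (ε * B / log B) := by
  have hB1 : 1 < B := by linarith
  have hlogB : 0 < log B := log_pos hB1
  have hp : 0 < ε * B / log B := by positivity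
  have hx : 0 < 1 - B⁻¹ := sub_pos.mpr (inv_lt_one_of_one_lt₀ hB1)
  have hx1 : 1 - B⁻¹ ≠ 1 := (sub_lt_self 1 (by positivity)).ne
  have hratio : B / ((B - 1) * log B) ≤ 1 :=
    (div_le_one (mul_pos (by linarith) hlogB)).mpr (le_sub_one_mul_log hB)
  calc 1 - ε ≤ 1 - ε * (B / ((B - 1) * log B)) :=
        by linarith [mul_le_of_le_one_right hε.le hratio]
    _ = 1 + ε * B / log B * -(B - 1)⁻¹ := by field_simp; ring
    _ ≤ 1 + ε * B / log B * log (1 - B⁻¹) := by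
      gcongr; exact neg_inv_sub_one_le_log_one_sub_inv hB1
    _ < (1 - B⁻¹) ^ (ε * B / log B) := one_add_mul_log_lt_rpow hx hx1 hp.ne'

end Real

theorem cutoff_bound_general
    (ε h : ℝ) (hε0 : 0 < ε)
    (B : ℝ) (hB : B = Real.log h / ε) (hB4 : 4 ≤ B) :
    1 - ε < (1 - 1 / B) ^ (Real.log h / Real.log B) := by
  have hlogh : Real.log h = ε * B := by rw [hB]; field_simp
  rw [hlogh, one_div]
  exact Real.one_sub_lt_one_sub_inv_rpow hε0 hB4

/-- Let `ε` and `h` be real numbers with `0 < ε < 1` and `h > 1`, and set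
`B = ln(h)/ε`. If `B ≥ 4`, then `(1 - 1/B)^{log_B h} > 1 - ε`, where
`log_B h = (ln h)/(ln B)` and the power is the real power function. -/
theorem cutoff_bound
    (ε h : ℝ) (hε0 : 0 < ε) (hε1 : ε < 1) (hh : 1 < h)
    (B : ℝ) (hB : B = Real.log h / ε) (hB4 : 4 ≤ B) :
    1 - ε < (1 - 1 / B) ^ (Real.log h / Real.log B) :=
  cutoff_bound_general ε h hε0 B hB hB4
end

section
/- Fix a real number h > 1. The function B ↦ (1 - 1/B)^{log_B h} = exp((ln h / ln B) · ln(1 - 1/B)) is strictly monotone increasing on the interval (1, ∞). -/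
/-!
Writing the base as `exp (log (1 - 1/B))`, the power is `exp (log h * φ B)` with
`φ B = log (1 - 1/B) / log B`. On `(1, ∞)` the numerator is negative and increasing while the
denominator is positive and increasing, so `|φ|` strictly decreases and `φ` strictly increases;
as `log h > 0`, so does the power.
-/

open Real Set

lemma one_sub_one_div_mem_Ioo {B : ℝ} (hB : 1 < B) : 1 - 1 / B ∈ Ioo 0 1 := by
  have hB' : 1 / B < 1 := (div_lt_one (by linarith)).2 hB
  constructor
  · linarith
  · have : 0 < 1 / B := by positivity
    linarith

lemma strictMonoOn_log_one_sub_one_div_div_log :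
    StrictMonoOn (fun B : ℝ => log (1 - 1 / B) / log B) (Ioi 1) := by
  intro a (ha : 1 < a) b (hb : 1 < b) hab
  obtain ⟨hbase_a, -⟩ := one_sub_one_div_mem_Ioo ha
  obtain ⟨hbase_b₀, hbase_b₁⟩ := one_sub_one_div_mem_Ioo hb
  have hlog_base : log (1 - 1 / a) < log (1 - 1 / b) :=
    log_lt_log hbase_a (by linarith [one_div_lt_one_div_of_lt (by linarith) hab])
  have hlog_base_neg : log (1 - 1 / b) < 0 := log_neg hbase_b₀ hbase_b₁
  have hlog_ab : log a < log b := log_lt_log (by linarith) hab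
  rw [div_lt_div_iff₀ (log_pos ha) (log_pos hb)]
  calc log (1 - 1 / a) * log b < log (1 - 1 / b) * log b :=
        mul_lt_mul_of_pos_right hlog_base (log_pos hb)
    _ < log (1 - 1 / b) * log a := mul_lt_mul_of_neg_left hlog_ab hlog_base_neg

/-- Fix a real number `h > 1`. The function
`B ↦ (1 - 1/B)^{log_B h} = exp((ln h / ln B) · ln(1 - 1/B))` is strictly monotone
increasing on the interval `(1, ∞)`. -/
theorem strictMonoOn_success_probability
    (h : ℝ) (hh : 1 < h) :
    StrictMonoOn (fun B : ℝ => (1 - 1 / B) ^ (Real.log h / Real.log B))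
      (Set.Ioi (1 : ℝ)) := by
  have hexp : StrictMonoOn (fun B : ℝ => exp (log h * (log (1 - 1 / B) / log B))) (Ioi 1) :=
    exp_strictMono.comp_strictMonoOn <|
      (strictMono_mul_left_of_pos (log_pos hh)).comp_strictMonoOn
        strictMonoOn_log_one_sub_one_div_div_log
  refine hexp.congr fun B hB => ?_
  rw [rpow_def_of_pos (one_sub_one_div_mem_Ioo hB).1]
  ring_nf
end

section
/- Let n ≥ 2 and write n - 1 = k·Q with k ≥ 1. Suppose a natural number a satisfies a^{n-1} ≡ 1 (mod n), and for every prime q dividing k, gcd(a^{(n-1)/q} - 1, n) = 1. Then every prime divisor p of n satisfies p ≡ 1 (mod k); in particular every prime factor of n exceeds k when k ≥ 2. -/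
/-! If `p ∣ n` is prime and `b = a ^ Q` modulo `p`, then `b ^ k = a ^ (n - 1) = 1`, while for every
prime `q ∣ k` the power `b ^ (k / q) = a ^ ((n - 1) / q)` is not `1`, since otherwise
`p ∣ gcd (a ^ ((n - 1) / q) - 1, n) = 1`. Hence `b` has order exactly `k` in `(ZMod p)ˣ`, and
Fermat's little theorem gives `k ∣ p - 1`. -/

theorem orderOf_pow_eq_of_pow_mul_eq_one {M : Type*} [Monoid M] {x : M} {k Q : ℕ} (hk : 0 < k)
    (hx : x ^ (k * Q) = 1) (hd : ∀ q : ℕ, q.Prime → q ∣ k → x ^ (k * Q / q) ≠ 1) :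
    orderOf (x ^ Q) = k := by
  refine orderOf_eq_of_pow_and_pow_div_prime hk (by rwa [← pow_mul, mul_comm]) fun q hq hqk => ?_
  rw [← pow_mul, mul_comm, Nat.div_mul_right_comm hqk]
  exact hd q hq hqk

theorem ZMod.natCast_pow_ne_one_of_gcd_pow_sub_one_eq_one {a m n p : ℕ} (hp : p ≠ 1)
    (hpn : p ∣ n) (h : Nat.gcd (a ^ m - 1) n = 1) : (a : ZMod p) ^ m ≠ 1 := by
  intro hpow
  have hmod : a ^ m ≡ 1 [MOD p] := by
    rw [← ZMod.natCast_eq_natCast_iff]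
    push_cast
    exact hpow
  have hdvd : p ∣ a ^ m - 1 := Nat.dvd_of_mod_eq_zero (Nat.sub_mod_eq_zero_of_mod_eq hmod)
  exact hp (Nat.dvd_one.mp (h ▸ Nat.dvd_gcd hdvd hpn))

theorem dvd_sub_one_of_pocklington {n k Q a p : ℕ} (hk : 1 ≤ k) (hfact : n - 1 = k * Q)
    (ha : a ^ (n - 1) ≡ 1 [MOD n])
    (hgcd : ∀ q : ℕ, q.Prime → q ∣ k → Nat.gcd (a ^ ((n - 1) / q) - 1) n = 1)
    (hp : p.Prime) (hpn : p ∣ n) : k ∣ p - 1 := by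
  have : Fact p.Prime := ⟨hp⟩
  have hx : (a : ZMod p) ^ (k * Q) = 1 := by
    rw [← hfact]
    exact_mod_cast (ZMod.natCast_eq_natCast_iff _ _ _).mpr (ha.of_dvd hpn)
  have hord : orderOf ((a : ZMod p) ^ Q) = k :=
    orderOf_pow_eq_of_pow_mul_eq_one hk hx fun q hq hqk => hfact ▸
      ZMod.natCast_pow_ne_one_of_gcd_pow_sub_one_eq_one hp.ne_one hpn (hgcd q hq hqk)
  have hne : (a : ZMod p) ^ Q ≠ 0 := by
    rintro h0
    rw [mul_comm, pow_mul, h0, zero_pow (by omega)] at hx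
    exact zero_ne_one hx
  exact hord ▸ ZMod.orderOf_dvd_card_sub_one hne

theorem pocklington_style_lemma_general
    (n : ℕ) (k Q : ℕ) (hk : 1 ≤ k) (hfact : n - 1 = k * Q)
    (a : ℕ) (ha : a ^ (n - 1) ≡ 1 [MOD n])
    (hgcd : ∀ q : ℕ, q.Prime → q ∣ k → Nat.gcd (a ^ ((n - 1) / q) - 1) n = 1) :
    (∀ p : ℕ, p.Prime → p ∣ n → p ≡ 1 [MOD k]) ∧
      (2 ≤ k → ∀ p : ℕ, p.Prime → p ∣ n → k < p) := by
  have hdvd {p : ℕ} (hp : p.Prime) (hpn : p ∣ n) : k ∣ p - 1 :=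
    dvd_sub_one_of_pocklington hk hfact ha hgcd hp hpn
  refine ⟨fun p hp hpn => ((Nat.modEq_iff_dvd' hp.one_le).mpr (hdvd hp hpn)).symm,
    fun _ p hp hpn => ?_⟩
  have := Nat.le_of_dvd (Nat.sub_pos_of_lt hp.one_lt) (hdvd hp hpn)
  omega

/-- Let `n ≥ 2` and write `n - 1 = k·Q` with `k ≥ 1`. Suppose `a` satisfies
`a^{n-1} ≡ 1 (mod n)` and, for every prime `q` dividing `k`,
`gcd(a^{(n-1)/q} - 1, n) = 1`. Then every prime divisor `p` of `n` satisfies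
`p ≡ 1 (mod k)`; in particular every prime factor of `n` exceeds `k` when `k ≥ 2`. -/
theorem pocklington_style_lemma
    (n : ℕ) (hn : 2 ≤ n) (k Q : ℕ) (hk : 1 ≤ k) (hfact : n - 1 = k * Q)
    (a : ℕ) (ha : a ^ (n - 1) ≡ 1 [MOD n])
    (hgcd : ∀ q : ℕ, q.Prime → q ∣ k → Nat.gcd (a ^ ((n - 1) / q) - 1) n = 1) :
    (∀ p : ℕ, p.Prime → p ∣ n → p ≡ 1 [MOD k]) ∧
      (2 ≤ k → ∀ p : ℕ, p.Prime → p ∣ n → k < p) :=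
  pocklington_style_lemma_general n k Q hk hfact a ha hgcd
end
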